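/- (Proposition 2, exact form for integer shape.) Let D be the distance from a uniformly random point of the disk of radius R > 0 (centered at the origin, at height 0) to the point (0,0,h) with h > 0, and let G₁, …, G_l be i.i.d. random variables, independent of D, each with a Gamma distribution of integer shape k ≥ 1 and scale θ > 0. Then for every w > 0, the coverage probability after l code-combining rounds satisfies P(D^{-2} Σ_{i=1}^{l} G_i > w) = (θ/(R² w)) · Σ_{i=0}^{l·k−1} [γ(i+1, (h²+R²)w/θ) − γ(i+1, h² w/θ)] / i!. -/

import Mathlib

/-!
Given `D = d`, the sum of the `G i` is Gamma distributed with shape `l * k`, so it exceeds `w d²`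
with probability `e^{-x} ∑_{i < l k} x^i / i!`, `x = w d² / θ`; this follows by induction on `l`,
the convolution step being a Beta integral. Averaging over the disk in polar coordinates and
substituting `u = w (r² + h²) / θ` turns `r dr` into `θ / (2 w) du`, and each `∫ e^{-u} u^i du`
is a difference of lower incomplete gamma values.
-/

open MeasureTheory ProbabilityTheory Real

/-- The closed disk of radius `R` centered at the origin in the plane. -/
def diskSet (R : ℝ) : Set (ℝ × ℝ) := {p | p.1 ^ 2 + p.2 ^ 2 ≤ R ^ 2}

/-- The uniform probability measure on the closed disk of radius `R`. -/
noncomputable def diskUniform (R : ℝ) : Measure (ℝ × ℝ) :=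
  (volume (diskSet R))⁻¹ • volume.restrict (diskSet R)

/-- The Gamma distribution with shape `k` and scale `θ`, given by its density
`x ^ (k-1) * exp (-x/θ) / (Γ k * θ ^ k)` on `(0, ∞)`. -/
noncomputable def gammaScaleMeasure (k θ : ℝ) : Measure ℝ :=
  volume.withDensity fun x =>
    if 0 < x then
      ENNReal.ofReal (x ^ (k - 1) * Real.exp (-x / θ) / (Real.Gamma k * θ ^ k)) else 0

/-- The lower incomplete gamma function `γ(s, x) = ∫ t in (0, x), t ^ (s-1) * exp (-t)`. -/
noncomputable def lowerGamma (s x : ℝ) : ℝ := ∫ t in (0:ℝ)..x, t ^ (s - 1) * Real.exp (-t)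

open Set Filter Topology
open scoped Nat

/-- `P(T > t)` for `T` Gamma distributed with shape `n` and scale `1`. -/
noncomputable def erlangTail (n : ℕ) (t : ℝ) : ℝ :=
  ∑ i ∈ Finset.range n, exp (-t) * t ^ i / i !

lemma erlangTail_nonneg (n : ℕ) {t : ℝ} (ht : 0 ≤ t) : 0 ≤ erlangTail n t :=
  Finset.sum_nonneg fun i _ => by positivity

@[simp]
lemma erlangTail_succ_zero (n : ℕ) : erlangTail (n + 1) 0 = 1 := by
  simp [erlangTail, Finset.sum_range_succ']

@[fun_prop]
lemma continuous_erlangTail (n : ℕ) : Continuous (erlangTail n) := by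
  unfold erlangTail
  fun_prop

lemma erlangTail_add (m n : ℕ) (t : ℝ) :
    erlangTail (m + n) t = erlangTail m t + ∑ i ∈ Finset.range n,
      exp (-t) * t ^ (m + i) / (m + i) ! :=
  Finset.sum_range_add _ m n

lemma erlangTail_le_erlangTail_add (m n : ℕ) {t : ℝ} (ht : 0 ≤ t) :
    erlangTail m t ≤ erlangTail (m + n) t := by
  rw [erlangTail_add]
  exact le_add_of_nonneg_right (Finset.sum_nonneg fun i _ => by positivity)

lemma hasDerivAt_erlangTail_succ (n : ℕ) (t : ℝ) :
    HasDerivAt (erlangTail (n + 1)) (-(exp (-t) * t ^ n / n !)) t := by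
  induction n with
  | zero =>
    have h1 : erlangTail 1 = fun s => exp (-s) := by ext s; simp [erlangTail]
    simpa [h1] using (hasDerivAt_neg t).exp
  | succ n ih =>
    have hsucc : erlangTail (n + 1 + 1) = fun s => erlangTail (n + 1) s +
        exp (-s) * s ^ (n + 1) / (n + 1) ! := by
      ext s
      exact Finset.sum_range_succ _ _
    have hterm := ((hasDerivAt_neg t).exp.mul (hasDerivAt_pow (n + 1) t)).div_const
      ((n + 1) ! : ℝ)
    rw [hsucc]
    refine (ih.add hterm).congr_deriv ?_
    rw [Nat.factorial_succ]
    push_cast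
    field_simp
    ring

lemma tendsto_erlangTail_atTop (n : ℕ) : Tendsto (erlangTail n) atTop (𝓝 0) := by
  unfold erlangTail
  have hterm (i : ℕ) : Tendsto (fun t : ℝ => exp (-t) * t ^ i / i !) atTop (𝓝 0) := by
    simpa [mul_comm] using (tendsto_pow_mul_exp_neg_atTop_nhds_zero i).div_const (i ! : ℝ)
  simpa using tendsto_finsetSum (Finset.range n) fun i _ => hterm i

/-- Density of the Gamma law of shape `n + 1` and scale `θ`. -/
noncomputable def erlangPDF (n : ℕ) (θ y : ℝ) : ℝ :=
  y ^ n * exp (-(y / θ)) / (n ! * θ ^ (n + 1))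

lemma erlangPDF_nonneg (n : ℕ) {θ y : ℝ} (hθ : 0 ≤ θ) (hy : 0 ≤ y) : 0 ≤ erlangPDF n θ y := by
  unfold erlangPDF
  positivity

@[fun_prop]
lemma continuous_erlangPDF (n : ℕ) (θ : ℝ) : Continuous (erlangPDF n θ) := by
  unfold erlangPDF
  fun_prop

lemma hasDerivAt_neg_erlangTail_div (n : ℕ) {θ : ℝ} (hθ : θ ≠ 0) (x : ℝ) :
    HasDerivAt (fun x => -erlangTail (n + 1) (x / θ)) (erlangPDF n θ x) x := by
  refine (((hasDerivAt_erlangTail_succ n (x / θ)).comp x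
    ((hasDerivAt_id x).div_const θ)).neg).congr_deriv ?_
  simp only [erlangPDF, div_pow]
  field_simp
  ring

lemma tendsto_neg_erlangTail_div_atTop (n : ℕ) {θ : ℝ} (hθ : 0 < θ) :
    Tendsto (fun x => -erlangTail n (x / θ)) atTop (𝓝 0) := by
  simpa using ((tendsto_erlangTail_atTop n).comp (tendsto_id.atTop_div_const hθ)).neg

lemma integrableOn_Ioi_erlangPDF (n : ℕ) {θ : ℝ} (hθ : 0 < θ) {a : ℝ} (ha : 0 ≤ a) :
    IntegrableOn (erlangPDF n θ) (Ioi a) :=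
  integrableOn_Ioi_deriv_of_nonneg' (fun x _ => hasDerivAt_neg_erlangTail_div n hθ.ne' x)
    (fun _ hx => erlangPDF_nonneg n hθ.le (ha.trans hx.out.le))
    (tendsto_neg_erlangTail_div_atTop _ hθ)

lemma integral_Ioi_erlangPDF (n : ℕ) {θ : ℝ} (hθ : 0 < θ) {a : ℝ} (ha : 0 ≤ a) :
    ∫ y in Ioi a, erlangPDF n θ y = erlangTail (n + 1) (a / θ) := by
  rw [integral_Ioi_of_hasDerivAt_of_tendsto' (fun x _ => hasDerivAt_neg_erlangTail_div n hθ.ne' x)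
    (integrableOn_Ioi_erlangPDF n hθ ha) (tendsto_neg_erlangTail_div_atTop _ hθ)]
  ring

lemma gammaScaleMeasure_natCast_succ (n : ℕ) (θ : ℝ) :
    gammaScaleMeasure ((n + 1 : ℕ) : ℝ) θ =
      (volume.restrict (Ioi 0)).withDensity fun y => ENNReal.ofReal (erlangPDF n θ y) := by
  rw [gammaScaleMeasure, ← withDensity_indicator measurableSet_Ioi]
  congr 1
  ext y
  by_cases hy : 0 < y
  · rw [if_pos hy, indicator_of_mem (mem_Ioi.2 hy), erlangPDF, Real.rpow_natCast, Nat.cast_succ,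
      add_sub_cancel_right, Real.rpow_natCast, Real.Gamma_nat_eq_factorial, neg_div]
  · rw [if_neg hy, indicator_of_notMem (mt mem_Ioi.1 hy)]

lemma gammaScaleMeasure_Ioi (n : ℕ) {θ : ℝ} (hθ : 0 < θ) {a : ℝ} (ha : 0 ≤ a) :
    gammaScaleMeasure ((n + 1 : ℕ) : ℝ) θ (Ioi a) =
      ENNReal.ofReal (erlangTail (n + 1) (a / θ)) := by
  rw [gammaScaleMeasure_natCast_succ, withDensity_apply _ measurableSet_Ioi,
    Measure.restrict_restrict measurableSet_Ioi, Ioi_inter_Ioi, sup_of_le_left ha,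
    ← ofReal_integral_eq_lintegral_ofReal (integrableOn_Ioi_erlangPDF n hθ ha)
      ((ae_restrict_iff' measurableSet_Ioi).2 (ae_of_all _ fun y hy =>
        erlangPDF_nonneg n hθ.le (ha.trans hy.out.le))),
    integral_Ioi_erlangPDF n hθ ha]

lemma ae_gammaScaleMeasure_pos (n : ℕ) (θ : ℝ) :
    ∀ᵐ y ∂gammaScaleMeasure ((n + 1 : ℕ) : ℝ) θ, 0 < y := by
  rw [gammaScaleMeasure_natCast_succ]
  exact (withDensity_absolutelyContinuous _ _).ae_le (ae_restrict_mem measurableSet_Ioi)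

lemma isProbabilityMeasure_gammaScaleMeasure (n : ℕ) {θ : ℝ} (hθ : 0 < θ) :
    IsProbabilityMeasure (gammaScaleMeasure ((n + 1 : ℕ) : ℝ) θ) := by
  constructor
  rw [← measure_congr (ae_eq_univ.2 ?_), gammaScaleMeasure_Ioi n hθ le_rfl]
  · simp
  · exact ae_gammaScaleMeasure_pos n θ

lemma integral_pow_mul_sub_pow_succ (p q : ℕ) (b : ℝ) :
    ∫ t in (0:ℝ)..b, t ^ p * (b - t) ^ (q + 1) =
      (q + 1) / (p + 1) * ∫ t in (0:ℝ)..b, t ^ (p + 1) * (b - t) ^ q := by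
  have hu (t : ℝ) : HasDerivAt (fun t => (b - t) ^ (q + 1)) (-((q + 1) * (b - t) ^ q)) t := by
    refine (((hasDerivAt_id t).const_sub b).pow (q + 1)).congr_deriv ?_
    simp
  have hv (t : ℝ) : HasDerivAt (fun t : ℝ => t ^ (p + 1) / ((p : ℝ) + 1)) (t ^ p) t := by
    refine ((hasDerivAt_pow (p + 1) t).div_const ((p : ℝ) + 1)).congr_deriv ?_
    push_cast
    field_simp
  have parts := intervalIntegral.integral_mul_deriv_eq_deriv_mul (a := 0) (b := b) (fun t _ => hu t)
    (fun t _ => hv t) (by apply Continuous.intervalIntegrable; fun_prop)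
    (by apply Continuous.intervalIntegrable; fun_prop)
  simp only [sub_self, zero_pow (Nat.succ_ne_zero _), zero_mul, mul_zero, sub_zero,
    zero_div, zero_sub] at parts
  calc ∫ t in (0:ℝ)..b, t ^ p * (b - t) ^ (q + 1)
      = ∫ t in (0:ℝ)..b, (b - t) ^ (q + 1) * t ^ p := by simp only [mul_comm]
    _ = -∫ t in (0:ℝ)..b, -((q + 1) * (b - t) ^ q) * (t ^ (p + 1) / (p + 1)) := parts
    _ = _ := by
      rw [← intervalIntegral.integral_neg, ← intervalIntegral.integral_const_mul]
      congr 1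
      ext t
      field_simp

lemma integral_pow_mul_sub_pow (p q : ℕ) (b : ℝ) :
    ∫ t in (0:ℝ)..b, t ^ p * (b - t) ^ q = p ! * q ! * b ^ (p + q + 1) / (p + q + 1) ! := by
  induction q generalizing p with
  | zero =>
    simp only [pow_zero, mul_one, integral_pow, Nat.factorial_zero, Nat.cast_one, add_zero,
      Nat.factorial_succ]
    push_cast
    field_simp
    simp
  | succ q ih =>
    rw [integral_pow_mul_sub_pow_succ, ih, show p + 1 + q + 1 = p + (q + 1) + 1 by ring,
      Nat.factorial_succ p, Nat.factorial_succ q]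
    push_cast
    field_simp

lemma integral_erlangPDF_mul_erlangTail (m n : ℕ) {θ : ℝ} (hθ : θ ≠ 0) (a : ℝ) :
    ∫ y in (0:ℝ)..a, erlangPDF m θ y * erlangTail n ((a - y) / θ) =
      erlangTail (m + 1 + n) (a / θ) - erlangTail (m + 1) (a / θ) := by
  have hterm (i : ℕ) : ∫ y in (0:ℝ)..a,
      erlangPDF m θ y * (exp (-((a - y) / θ)) * ((a - y) / θ) ^ i / i !) =
        exp (-(a / θ)) * (a / θ) ^ (m + 1 + i) / (m + 1 + i) ! := by
    have hpt (y : ℝ) : erlangPDF m θ y * (exp (-((a - y) / θ)) * ((a - y) / θ) ^ i / i !) =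
        exp (-(a / θ)) / (m ! * i ! * θ ^ (m + 1 + i)) * (y ^ m * (a - y) ^ i) := by
      rw [show -(a / θ) = -(y / θ) + -((a - y) / θ) by ring, exp_add]
      simp only [erlangPDF, div_pow]
      field_simp
      ring
    simp_rw [hpt]
    rw [intervalIntegral.integral_const_mul, integral_pow_mul_sub_pow,
      show m + i + 1 = m + 1 + i by ring, div_pow]
    field_simp
  rw [erlangTail_add, add_sub_cancel_left]
  simp only [erlangTail, Finset.mul_sum]
  rw [intervalIntegral.integral_finsetSum fun i _ => by
    apply Continuous.intervalIntegrable; fun_prop]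
  exact Finset.sum_congr rfl fun i _ => hterm i

lemma measurableSet_sum_gt (ι : Type*) [Fintype ι] (a : ℝ) :
    MeasurableSet {x : ι → ℝ | a < ∑ i, x i} :=
  measurableSet_lt measurable_const (by fun_prop)

lemma pi_sum_gt_succ (ν : Measure ℝ) [SigmaFinite ν] (l : ℕ) (a : ℝ) :
    Measure.pi (fun _ : Fin (l + 1) => ν) {x | a < ∑ i, x i} =
      ∫⁻ y, Measure.pi (fun _ : Fin l => ν) {x | a - y < ∑ i, x i} ∂ν := by
  have hT : MeasurableSet {p : ℝ × (Fin l → ℝ) | a < p.1 + ∑ i, p.2 i} :=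
    measurableSet_lt measurable_const (by fun_prop)
  have hpre : MeasurableEquiv.piFinSuccAbove (fun _ => ℝ) 0 ⁻¹'
      {p : ℝ × (Fin l → ℝ) | a < p.1 + ∑ i, p.2 i} = {x | a < ∑ i, x i} := by
    ext x
    simp [MeasurableEquiv.piFinSuccAbove, Fin.sum_univ_succ, Fin.tail]
  rw [← hpre, (measurePreserving_piFinSuccAbove (fun _ => ν) 0).measure_preimage
    hT.nullMeasurableSet, Measure.prod_apply hT]
  refine lintegral_congr fun y => congrArg _ ?_
  ext x
  simp [sub_lt_iff_lt_add']

lemma pi_sum_gt_eq_one_of_neg {ν : Measure ℝ} [IsProbabilityMeasure ν] (hν : ∀ᵐ y ∂ν, 0 < y)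
    (l : ℕ) {a : ℝ} (ha : a < 0) : Measure.pi (fun _ : Fin l => ν) {x | a < ∑ i, x i} = 1 := by
  have hpos : ∀ᵐ x ∂Measure.pi (fun _ : Fin l => ν), ∀ i, 0 < x i :=
    ae_all_iff.2 fun _ => Measure.tendsto_eval_ae_ae.eventually hν
  rw [← measure_univ (μ := Measure.pi fun _ : Fin l => ν),
    ← ae_iff_measure_eq (measurableSet_sum_gt _ a).nullMeasurableSet]
  filter_upwards [hpos] with x hx
  exact ha.trans_le (Finset.sum_nonneg fun i _ => (hx i).le)

lemma lintegral_gammaScaleMeasure_erlangTail_sub (m n : ℕ) {θ : ℝ} (hθ : 0 < θ) {a : ℝ}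
    (ha : 0 ≤ a) :
    ∫⁻ y, (if y ≤ a then ENNReal.ofReal (erlangTail n ((a - y) / θ)) else 1)
        ∂gammaScaleMeasure ((m + 1 : ℕ) : ℝ) θ =
      ENNReal.ofReal (erlangTail (m + 1 + n) (a / θ)) := by
  have hnonneg : ∀ y ∈ Ioc 0 a, 0 ≤ erlangPDF m θ y * erlangTail n ((a - y) / θ) :=
    fun y hy => mul_nonneg (erlangPDF_nonneg m hθ.le hy.1.le)
      (erlangTail_nonneg n (div_nonneg (sub_nonneg.2 hy.2) hθ.le))
  have hle : ∫⁻ y in Iic a, ENNReal.ofReal (erlangTail n ((a - y) / θ))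
      ∂gammaScaleMeasure ((m + 1 : ℕ) : ℝ) θ =
      ENNReal.ofReal (∫ y in (0:ℝ)..a, erlangPDF m θ y * erlangTail n ((a - y) / θ)) := by
    rw [gammaScaleMeasure_natCast_succ, setLIntegral_withDensity_eq_setLIntegral_mul _
      (by fun_prop) (by fun_prop) measurableSet_Iic, Measure.restrict_restrict measurableSet_Iic,
      Iic_inter_Ioi, intervalIntegral.integral_of_le ha,
      ofReal_integral_eq_lintegral_ofReal (Continuous.integrableOn_Ioc (by fun_prop))
        ((ae_restrict_iff' measurableSet_Ioc).2 (ae_of_all _ hnonneg))]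
    refine setLIntegral_congr_fun measurableSet_Ioc fun y hy => ?_
    rw [Pi.mul_apply, ENNReal.ofReal_mul (erlangPDF_nonneg m hθ.le hy.1.le)]
  rw [← lintegral_add_compl _ (measurableSet_Iic (a := a)), compl_Iic,
    setLIntegral_congr_fun measurableSet_Iic fun y hy => if_pos (mem_Iic.1 hy),
    setLIntegral_congr_fun measurableSet_Ioi fun y hy => if_neg (not_le.2 (mem_Ioi.1 hy)),
    setLIntegral_one, gammaScaleMeasure_Ioi m hθ ha, hle,
    integral_erlangPDF_mul_erlangTail m n hθ.ne',
    ← ENNReal.ofReal_add (sub_nonneg.2 (erlangTail_le_erlangTail_add _ n (by positivity)))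
      (erlangTail_nonneg _ (by positivity)), sub_add_cancel]

lemma pi_gammaScaleMeasure_sum_gt (m : ℕ) {θ : ℝ} (hθ : 0 < θ) (l : ℕ) {a : ℝ} (ha : 0 ≤ a) :
    Measure.pi (fun _ : Fin l => gammaScaleMeasure ((m + 1 : ℕ) : ℝ) θ) {x | a < ∑ i, x i} =
      ENNReal.ofReal (erlangTail (l * (m + 1)) (a / θ)) := by
  induction l generalizing a with
  | zero => simp [ha.not_gt, erlangTail]
  | succ l ih =>
    have := isProbabilityMeasure_gammaScaleMeasure m hθ
    have htail : (fun y => Measure.pi (fun _ : Fin l => gammaScaleMeasure ((m + 1 : ℕ) : ℝ) θ)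
        {x | a - y < ∑ i, x i}) =
        fun y => if y ≤ a then ENNReal.ofReal (erlangTail (l * (m + 1)) ((a - y) / θ)) else 1 := by
      ext y
      split_ifs with hy
      · exact ih (sub_nonneg.2 hy)
      · exact pi_sum_gt_eq_one_of_neg (ae_gammaScaleMeasure_pos m θ) l (by linarith)
    rw [pi_sum_gt_succ, htail, lintegral_gammaScaleMeasure_erlangTail_sub m _ hθ ha,
      show m + 1 + l * (m + 1) = (l + 1) * (m + 1) by ring]

lemma measurableSet_diskSet (R : ℝ) : MeasurableSet (diskSet R) :=
  measurableSet_le (by fun_prop) measurable_const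

lemma isCompact_diskSet (R : ℝ) : IsCompact (diskSet R) := by
  refine Metric.isCompact_of_isClosed_isBounded (isClosed_le (by fun_prop) continuous_const)
    ((Metric.isBounded_Icc (-|R|, -|R|) (|R|, |R|)).subset fun p hp => ?_)
  have hp : p.1 ^ 2 + p.2 ^ 2 ≤ |R| ^ 2 := (sq_abs R).symm ▸ hp
  have h1 := abs_le_of_sq_le_sq' (by nlinarith : p.1 ^ 2 ≤ |R| ^ 2) (abs_nonneg R)
  have h2 := abs_le_of_sq_le_sq' (by nlinarith : p.2 ^ 2 ≤ |R| ^ 2) (abs_nonneg R)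
  exact ⟨⟨h1.1, h2.1⟩, ⟨h1.2, h2.2⟩⟩

lemma sq_add_sq_polarCoord_symm (p : ℝ × ℝ) :
    (polarCoord.symm p).1 ^ 2 + (polarCoord.symm p).2 ^ 2 = p.1 ^ 2 := by
  simp only [polarCoord_symm_apply, mul_pow, ← mul_add, cos_sq_add_sin_sq, mul_one]

lemma setIntegral_diskSet {R : ℝ} (hR : 0 ≤ R) (g : ℝ → ℝ) :
    ∫ p in diskSet R, g (p.1 ^ 2 + p.2 ^ 2) = 2 * π * ∫ r in (0:ℝ)..R, r * g (r ^ 2) := by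
  have hpolar (p : ℝ × ℝ) : p.1 • (diskSet R).indicator (fun q => g (q.1 ^ 2 + q.2 ^ 2))
      (polarCoord.symm p) = (Icc (-R) R).indicator (fun r => r * g (r ^ 2)) p.1 := by
    have hmem : polarCoord.symm p ∈ diskSet R ↔ p.1 ∈ Icc (-R) R := by
      rw [diskSet, mem_ofPred_eq, sq_add_sq_polarCoord_symm, mem_Icc, ← abs_le, sq_le_sq,
        abs_of_nonneg hR]
    by_cases hp : p.1 ∈ Icc (-R) R
    · rw [indicator_of_mem (hmem.2 hp), indicator_of_mem hp, sq_add_sq_polarCoord_symm, smul_eq_mul]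
    · rw [indicator_of_notMem (mt hmem.1 hp), indicator_of_notMem hp, smul_zero]
  rw [← integral_indicator (measurableSet_diskSet R), ← integral_comp_polarCoord_symm,
    polarCoord_target, Measure.volume_eq_prod, ← Measure.prod_restrict]
  simp_rw [hpolar]
  have hIoc : Icc (-R) R ∩ Ioi 0 = Ioc 0 R := by
    ext r
    exact ⟨fun ⟨⟨_, hr⟩, h0⟩ => ⟨h0, hr⟩, fun ⟨h0, hr⟩ => ⟨⟨by linarith, hr⟩, h0⟩⟩
  rw [integral_fun_fst, integral_indicator measurableSet_Icc, Measure.restrict_restrict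
    measurableSet_Icc, hIoc, measureReal_restrict_apply_univ, Real.volume_real_Ioo_of_le
    (by linarith [pi_pos]), intervalIntegral.integral_of_le hR, smul_eq_mul]
  ring

lemma volume_diskSet {R : ℝ} (hR : 0 ≤ R) : volume (diskSet R) = ENNReal.ofReal (π * R ^ 2) := by
  have h := setIntegral_diskSet hR fun _ => 1
  rw [setIntegral_const, smul_eq_mul, mul_one, measureReal_def] at h
  rw [← ENNReal.ofReal_toReal (isCompact_diskSet R).measure_lt_top.ne, h]
  simp only [mul_one, integral_id]
  congr 1
  ring

lemma lintegral_diskUniform {R : ℝ} (hR : 0 < R) {g : ℝ → ℝ} (hg : Continuous g)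
    (hg0 : ∀ u, 0 ≤ u → 0 ≤ g u) :
    ∫⁻ p, ENNReal.ofReal (g (p.1 ^ 2 + p.2 ^ 2)) ∂diskUniform R =
      ENNReal.ofReal (2 / R ^ 2 * ∫ r in (0:ℝ)..R, r * g (r ^ 2)) := by
  rw [diskUniform, lintegral_smul_measure, volume_diskSet hR.le,
    ← ofReal_integral_eq_lintegral_ofReal (f := fun p : ℝ × ℝ => g (p.1 ^ 2 + p.2 ^ 2))
      ((hg.comp (by fun_prop)).continuousOn.integrableOn_compact (isCompact_diskSet R))
      (ae_of_all _ fun p => hg0 _ (by positivity)),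
    setIntegral_diskSet hR.le, ← ENNReal.ofReal_inv_of_pos (by positivity), smul_eq_mul,
    ← ENNReal.ofReal_mul (by positivity)]
  congr 1
  field_simp

lemma integral_mul_comp_mul_sq_add {f : ℝ → ℝ} (hf : Continuous f) {c : ℝ} (hc : c ≠ 0)
    (b R : ℝ) :
    ∫ r in (0:ℝ)..R, r * f (c * (r ^ 2 + b)) =
      (2 * c)⁻¹ * ∫ u in c * b..c * (R ^ 2 + b), f u := by
  have hderiv (r : ℝ) : HasDerivAt (fun r => c * (r ^ 2 + b)) (2 * c * r) r := by
    refine (((hasDerivAt_pow 2 r).add_const b).const_mul c).congr_deriv ?_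
    ring
  have hsubst := intervalIntegral.integral_comp_mul_deriv (a := 0) (b := R)
    (fun r _ => hderiv r) (by fun_prop) hf
  simp only [zero_pow two_ne_zero, zero_add, Function.comp_apply] at hsubst
  rw [← hsubst, ← intervalIntegral.integral_const_mul]
  congr 1
  ext r
  field_simp

lemma integral_erlangTail (n : ℕ) (x₀ x₁ : ℝ) :
    ∫ u in x₀..x₁, erlangTail n u = ∑ i ∈ Finset.range n,
      (lowerGamma ((i : ℝ) + 1) x₁ - lowerGamma ((i : ℝ) + 1) x₀) / i ! := by
  have hint (i : ℕ) (a b : ℝ) :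
      IntervalIntegrable (fun t : ℝ => t ^ ((i : ℝ) + 1 - 1) * exp (-t)) volume a b := by
    simp only [add_sub_cancel_right, Real.rpow_natCast]
    apply Continuous.intervalIntegrable
    fun_prop
  unfold erlangTail lowerGamma
  rw [intervalIntegral.integral_finsetSum fun i _ => by
    apply Continuous.intervalIntegrable; fun_prop]
  refine Finset.sum_congr rfl fun i _ => ?_
  rw [intervalIntegral.integral_interval_sub_left (hint i _ _) (hint i _ _),
    intervalIntegral.integral_div]
  simp only [add_sub_cancel_right, Real.rpow_natCast, mul_comm]

lemma map_fin_cons_eq_prod_pi {Ω β : Type*} [MeasurableSpace Ω] [MeasurableSpace β]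
    {P : Measure Ω} [IsProbabilityMeasure P] {n : ℕ} {X : Ω → β} {Y : Fin n → Ω → β}
    (hX : Measurable X) (hY : ∀ i, Measurable (Y i))
    (hind : iIndepFun (Fin.cons X Y : Fin (n + 1) → Ω → β) P) :
    P.map (fun ω => (X ω, fun i => Y i ω)) = (P.map X).prod (Measure.pi fun i => P.map (Y i)) := by
  have hcons : ∀ i, Measurable ((Fin.cons X Y : Fin (n + 1) → Ω → β) i) := Fin.cases hX hY
  have h := (measurePreserving_piFinSuccAbove
    (fun i => P.map ((Fin.cons X Y : Fin (n + 1) → Ω → β) i)) 0).map_eq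
  rw [← hind.map_fun_eq_pi_map fun i => (hcons i).aemeasurable,
    Measure.map_map (MeasurableEquiv.measurable _) (measurable_pi_lambda _ hcons)] at h
  simp only [MeasurableEquiv.piFinSuccAbove_apply, Fin.cons_zero, Fin.succAbove_zero,
    Fin.cons_succ] at h
  exact h

lemma measurableSet_inv_sq_mul_sum_gt (ι : Type*) [Fintype ι] (w : ℝ) :
    MeasurableSet {p : ℝ × (ι → ℝ) | w < (p.1 ^ 2)⁻¹ * ∑ i, p.2 i} :=
  measurableSet_lt measurable_const (by fun_prop)

lemma prod_pi_gammaScaleMeasure_ratio_gt {μ : Measure ℝ} [SFinite μ] (hμ : ∀ᵐ d ∂μ, d ≠ 0)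
    (m l : ℕ) {θ w : ℝ} (hθ : 0 < θ) (hw : 0 ≤ w) :
    (μ.prod (Measure.pi fun _ : Fin l => gammaScaleMeasure ((m + 1 : ℕ) : ℝ) θ))
        {p | w < (p.1 ^ 2)⁻¹ * ∑ i, p.2 i} =
      ∫⁻ d, ENNReal.ofReal (erlangTail (l * (m + 1)) (w / θ * d ^ 2)) ∂μ := by
  have := isProbabilityMeasure_gammaScaleMeasure m hθ
  rw [Measure.prod_apply (measurableSet_inv_sq_mul_sum_gt _ w)]
  refine lintegral_congr_ae (hμ.mono fun d hd => ?_)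
  dsimp only
  have hset : Prod.mk d ⁻¹' {p : ℝ × (Fin l → ℝ) | w < (p.1 ^ 2)⁻¹ * ∑ i, p.2 i} =
      {x | w * d ^ 2 < ∑ i, x i} := by
    ext x
    simp [inv_mul_eq_div, lt_div_iff₀ (sq_pos_of_ne_zero hd)]
  rw [hset, pi_gammaScaleMeasure_sum_gt m hθ l (by positivity), div_mul_eq_mul_div,
    mul_div_right_comm]

theorem coverage_probability_code_combining_general (Ω : Type*) [MeasurableSpace Ω] (P : Measure Ω)
    [IsProbabilityMeasure P] (R h θ : ℝ) (l k : ℕ) (hR : 0 < R) (hh : 0 < h)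
    (hθ : 0 < θ) (hk : 1 ≤ k) (D : Ω → ℝ) (G : Fin l → Ω → ℝ)
    (hDm : Measurable D) (hGm : ∀ i, Measurable (G i))
    (hD : Measure.map D P =
      Measure.map (fun p : ℝ × ℝ => Real.sqrt (p.1 ^ 2 + p.2 ^ 2 + h ^ 2)) (diskUniform R))
    (hG : ∀ i, Measure.map (G i) P = gammaScaleMeasure k θ)
    (hind : iIndepFun (Fin.cons D G : Fin (l + 1) → Ω → ℝ) P)
    (w : ℝ) (hw : 0 < w) :
    P {ω | w < ((D ω) ^ 2)⁻¹ * ∑ i, G i ω} =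
      ENNReal.ofReal (θ / (R ^ 2 * w) * ∑ i ∈ Finset.range (l * k),
        (lowerGamma ((i : ℝ) + 1) ((h ^ 2 + R ^ 2) * w / θ) -
          lowerGamma ((i : ℝ) + 1) (h ^ 2 * w / θ)) / (Nat.factorial i)) := by
  obtain ⟨m, rfl⟩ := Nat.exists_eq_add_of_le' hk
  have hD_ne : ∀ᵐ d ∂P.map D, d ≠ 0 := by
    rw [hD]
    exact (ae_map_iff (by fun_prop) (measurableSet_singleton 0).compl).2
      (ae_of_all _ fun p => (sqrt_pos.2 (by positivity)).ne')
  have hlaw : P.map (fun ω => (D ω, fun i => G i ω)) =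
      (P.map D).prod (Measure.pi fun _ => gammaScaleMeasure ((m + 1 : ℕ) : ℝ) θ) := by
    rw [map_fin_cons_eq_prod_pi hDm hGm hind]
    simp_rw [hG]
  calc P {ω | w < ((D ω) ^ 2)⁻¹ * ∑ i, G i ω}
      = P.map (fun ω => (D ω, fun i => G i ω)) {p | w < (p.1 ^ 2)⁻¹ * ∑ i, p.2 i} :=
        (Measure.map_apply (hDm.prodMk (measurable_pi_lambda _ hGm))
          (measurableSet_inv_sq_mul_sum_gt _ w)).symm
    _ = ∫⁻ p, ENNReal.ofReal (erlangTail (l * (m + 1)) (w / θ * (p.1 ^ 2 + p.2 ^ 2 + h ^ 2)))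
          ∂diskUniform R := by
        rw [hlaw, prod_pi_gammaScaleMeasure_ratio_gt hD_ne m l hθ hw.le, hD,
          lintegral_map (by fun_prop) (by fun_prop)]
        refine lintegral_congr fun p => ?_
        rw [sq_sqrt (by positivity)]
    _ = _ := by
        refine (lintegral_diskUniform hR
          (g := fun u => erlangTail (l * (m + 1)) (w / θ * (u + h ^ 2))) (by fun_prop)
          fun u hu => erlangTail_nonneg _ (by positivity)).trans ?_
        rw [integral_mul_comp_mul_sq_add (continuous_erlangTail _) (by positivity),
          integral_erlangTail, show w / θ * (R ^ 2 + h ^ 2) = (h ^ 2 + R ^ 2) * w / θ by ring,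
          show w / θ * h ^ 2 = h ^ 2 * w / θ by ring]
        congr 1
        field_simp

theorem coverage_probability_code_combining (Ω : Type*) [MeasurableSpace Ω] (P : Measure Ω)
    [IsProbabilityMeasure P] (R h θ : ℝ) (l k : ℕ) (hR : 0 < R) (hh : 0 < h)
    (hθ : 0 < θ) (hl : 1 ≤ l) (hk : 1 ≤ k) (D : Ω → ℝ) (G : Fin l → Ω → ℝ)
    (hDm : Measurable D) (hGm : ∀ i, Measurable (G i))
    (hD : Measure.map D P =
      Measure.map (fun p : ℝ × ℝ => Real.sqrt (p.1 ^ 2 + p.2 ^ 2 + h ^ 2)) (diskUniform R))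
    (hG : ∀ i, Measure.map (G i) P = gammaScaleMeasure k θ)
    (hind : iIndepFun (Fin.cons D G : Fin (l + 1) → Ω → ℝ) P)
    (w : ℝ) (hw : 0 < w) :
    P {ω | w < ((D ω) ^ 2)⁻¹ * ∑ i, G i ω} =
      ENNReal.ofReal (θ / (R ^ 2 * w) * ∑ i ∈ Finset.range (l * k),
        (lowerGamma ((i : ℝ) + 1) ((h ^ 2 + R ^ 2) * w / θ) -
          lowerGamma ((i : ℝ) + 1) (h ^ 2 * w / θ)) / (Nat.factorial i)) :=
  coverage_probability_code_combining_general Ω P R h θ l k hR hh hθ hk D G hDm hGm hD hG hind w hw
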